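/- (Garland's estimate.) Let X be a finite pure k-dimensional simplicial complex (k ≥ 1) such that every (k−1)-simplex of X is contained in exactly m k-simplices of X. Let λ(X) = min{ λ₂(lk(X,τ)) : τ ∈ X(k−2) }, where for τ ∈ X(k−2) the link lk(X,τ) is a graph. Then for every φ ∈ C^{k−1}(X) with d_{k−2}^* φ = 0 one has ‖d_{k−1}φ‖² ≥ (k·λ(X) − (k−1)m)·‖φ‖². Equivalently, min{ ‖d_{k−1}φ‖²/‖φ‖² : 0 ≠ φ ∈ ker d_{k−2}^* } ≥ k·λ(X) − (k−1)m. -/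

import Mathlib

open Finset

namespace BCC

/-! ### Simplicial cochain machinery.

A finite simplicial complex on a linearly ordered finite vertex type `V` is encoded as a
`Finset (Finset V)` of faces (downward closure is assumed as a hypothesis where needed;
the empty face plays the role of the `(-1)`-dimensional simplex, so that the cochain
complex below is the *augmented* (reduced) one).

A skew-symmetric real-valued function on ordered `j`-simplices is determined by its values
on the increasingly-ordered simplices, so `C^j(X)` is encoded as the space of real functions
on the faces of cardinality `j+1`.  Thus `Cochain X m` is `C^{m-1}(X)`, and `d X m` is the
coboundary `d_{m-1} : C^{m-1}(X) → C^m(X)`; in particular `d X 0` is the augmentation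
`d_{-1} : C^{-1}(X) = ℝ → C^0(X)`, `(d_{-1} a)(v) = a`.  `dStar X m` is the adjoint of
`d X m` with respect to the standard inner products `(φ, ψ) = ∑_{σ ∈ X(j)} φ(σ)ψ(σ)`,
written out explicitly. -/

/-- `C^{m-1}(X)`: real cochains supported on the faces of cardinality `m`. -/
abbrev Cochain {V : Type*} [Fintype V] [LinearOrder V] (X : Finset (Finset V)) (m : ℕ) :
    Type _ :=
  {s : Finset V // s ∈ X ∧ s.card = m} → ℝ

section Ordered
variable {V : Type*} [Fintype V] [LinearOrder V]

/-- The sign `(-1)^i` of the vertex `v` in the increasingly ordered simplex `σ`,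
where `i` is the position of `v` in `σ`. -/
noncomputable def sgn (σ : Finset V) (v : V) : ℝ :=
  (-1 : ℝ) ^ (σ.filter fun w => w < v).card

/-- The simplicial coboundary `d_{m-1} : C^{m-1}(X) → C^m(X)`,
`(dφ)(σ) = ∑_{i} (-1)^i φ(σ_i)`. -/
noncomputable def d (X : Finset (Finset V)) (m : ℕ) :
    Cochain X m →ₗ[ℝ] Cochain X (m + 1) where
  toFun φ := fun σ => ∑ v ∈ σ.1, sgn σ.1 v *
    (if h : σ.1.erase v ∈ X ∧ (σ.1.erase v).card = m then φ ⟨σ.1.erase v, h⟩ else 0)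
  map_add' φ ψ := by
    funext σ
    show (∑ v ∈ σ.1, (_ : ℝ)) = (∑ v ∈ σ.1, (_ : ℝ)) + (∑ v ∈ σ.1, (_ : ℝ))
    rw [← Finset.sum_add_distrib]
    refine Finset.sum_congr rfl fun v hv => ?_
    split
    · show sgn σ.1 v * (φ _ + ψ _) = _; ring
    · ring
  map_smul' c φ := by
    funext σ
    show (∑ v ∈ σ.1, _) = c * (∑ v ∈ σ.1, _)
    rw [Finset.mul_sum]
    refine Finset.sum_congr rfl fun v hv => ?_
    split
    · show sgn σ.1 v * (c * φ _) = _; ring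
    · ring

/-- The adjoint `d_{m-1}^* : C^m(X) → C^{m-1}(X)` of the coboundary `d X m` with respect to
the standard inner products, written out explicitly:
`(d^*ψ)(τ) = ∑_{v ∉ τ, τ ∪ {v} ∈ X} ± ψ(τ ∪ {v})`. -/
noncomputable def dStar (X : Finset (Finset V)) (m : ℕ) :
    Cochain X (m + 1) →ₗ[ℝ] Cochain X m where
  toFun ψ := fun τ => ∑ v ∈ τ.1ᶜ, sgn (insert v τ.1) v *
    (if h : insert v τ.1 ∈ X ∧ (insert v τ.1).card = m + 1 then ψ ⟨insert v τ.1, h⟩ else 0)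
  map_add' φ ψ := by
    funext τ
    show (∑ v ∈ τ.1ᶜ, (_ : ℝ)) = (∑ v ∈ τ.1ᶜ, (_ : ℝ)) + (∑ v ∈ τ.1ᶜ, (_ : ℝ))
    rw [← Finset.sum_add_distrib]
    refine Finset.sum_congr rfl fun v hv => ?_
    split
    · show sgn _ v * (φ _ + ψ _) = _; ring
    · ring
  map_smul' c φ := by
    funext τ
    show (∑ v ∈ τ.1ᶜ, _) = c * (∑ v ∈ τ.1ᶜ, _)
    rw [Finset.mul_sum]
    refine Finset.sum_congr rfl fun v hv => ?_
    split
    · show sgn _ v * (c * φ _) = _; ring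
    · ring

/-- The squared norm `‖φ‖² = ∑_{σ ∈ X(j)} φ(σ)²` of a cochain. -/
noncomputable def normSq {X : Finset (Finset V)} {m : ℕ} (φ : Cochain X m) : ℝ :=
  ∑ s, φ s ^ 2

/-- The reduced `m`-th Laplacian `L_m = d_{m-1} d_{m-1}^* + d_m^* d_m`
acting on `C^m(X) = Cochain X (m+1)`. -/
noncomputable def Lap (X : Finset (Finset V)) (m : ℕ) :
    Cochain X (m + 1) →ₗ[ℝ] Cochain X (m + 1) :=
  (d X m) ∘ₗ (dStar X m) + (dStar X (m + 1)) ∘ₗ (d X (m + 1))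

/-- The `m`-th spectral gap `μ_m(X)`: the minimal eigenvalue of the reduced `m`-th
Laplacian `L_m` acting on `C^m(X)`. -/
noncomputable def mu (X : Finset (Finset V)) (m : ℕ) : ℝ :=
  sInf {μ : ℝ | Module.End.HasEigenvalue (Lap X m) μ}

/-- The dimension of the `j`-th reduced real cohomology `H̃^j(X;ℝ) = ker d_j / im d_{j-1}`
of the augmented cochain complex of `X`. -/
noncomputable def cohomDim (X : Finset (Finset V)) (j : ℕ) : ℕ :=
  Module.finrank ℝ
    (↥(LinearMap.ker (d X (j + 1))) ⧸
      (LinearMap.range (d X j)).comap (LinearMap.ker (d X (j + 1))).subtype)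

/-! ### Links and `λ₂` of link graphs -/

/-- The vertex set of the link `lk(X,τ)` of the face `τ`. -/
def linkVerts (X : Finset (Finset V)) (τ : Finset V) : Finset V :=
  univ.filter (fun v => v ∉ τ ∧ insert v τ ∈ X)

/-- The Dirichlet energy `‖d₀ f‖² = ∑_{{u,v} ∈ lk(X,τ)(1)} (f v - f u)²` of a function `f`
on the vertices of the link graph `lk(X,τ)` (each unordered edge counted once). -/
noncomputable def linkEnergy (X : Finset (Finset V)) (τ : Finset V) (f : V → ℝ) : ℝ :=
  (1 / 2) * ∑ u : V, ∑ v : V,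
    if u ≠ v ∧ u ∉ τ ∧ v ∉ τ ∧ insert u (insert v τ) ∈ X then (f v - f u) ^ 2 else 0

/-- The second smallest eigenvalue `λ₂` of the Laplacian of the link graph `lk(X,τ)`,
via its variational characterization: the infimum of the Rayleigh quotients
`‖d₀ f‖²/‖f‖²` over nonzero functions `f` on the link vertices with `∑_v f(v) = 0`. -/
noncomputable def linkLambda2 (X : Finset (Finset V)) (τ : Finset V) : ℝ :=
  sInf {r : ℝ | ∃ f : V → ℝ, (∀ v, v ∉ linkVerts X τ → f v = 0) ∧ (∑ v, f v) = 0 ∧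
    f ≠ 0 ∧ r = linkEnergy X τ f / ∑ v, f v ^ 2}

/-- The localization `φ_τ` of a cochain `φ ∈ C^{m-1}(X)` to the link of a face `τ` with
`|τ| = m - 1` : `φ_τ(v) = φ(vτ)` (expressed through the chosen increasing orientations). -/
noncomputable def restrictLink (X : Finset (Finset V)) {m : ℕ} (φ : Cochain X m)
    (τ : Finset V) : V → ℝ :=
  fun v => if h : v ∉ τ ∧ insert v τ ∈ X ∧ (insert v τ).card = m then
    sgn (insert v τ) v * φ ⟨insert v τ, h.2.1, h.2.2⟩ else 0

end Ordered

section Graphs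
variable {V : Type*} [DecidableEq V]

/-- The link `lk(X,τ)` of a codimension-2 face, as a simple graph on its vertex set. -/
def linkGraph (X : Finset (Finset V)) (τ : Finset V) :
    SimpleGraph {v : V // v ∉ τ ∧ insert v τ ∈ X} where
  Adj u v := u ≠ v ∧ insert u.1 (insert v.1 τ) ∈ X
  symm := ⟨by
    rintro u v ⟨h1, h2⟩
    exact ⟨h1.symm, by rwa [Finset.insert_comm] at h2⟩⟩
  loopless := ⟨fun u h => h.1 rfl⟩

/-- The bipartite Cayley graph `C_A` on `{1,2} × G` (encoded as `Fin 2 × G`), with an edge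
between `(1,x₁)` and `(2,x₂)` whenever `x₁ x₂ ∈ A`. -/
def cayleyGraph (G : Type*) [Group G] [DecidableEq G] (A : Finset G) :
    SimpleGraph (Fin 2 × G) where
  Adj u v := (u.1 = 0 ∧ v.1 = 1 ∧ u.2 * v.2 ∈ A) ∨ (v.1 = 0 ∧ u.1 = 1 ∧ v.2 * u.2 ∈ A)
  symm := by tauto
  loopless := ⟨by
    rintro ⟨i, x⟩ (⟨h0, h1, -⟩ | ⟨h0, h1, -⟩) <;> rw [h0] at h1 <;> exact absurd h1 (by decide)⟩

/-- The disjoint union of `ℓ` copies of a graph `H`. -/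
def copies (ℓ : ℕ) {α : Type*} (H : SimpleGraph α) : SimpleGraph (Fin ℓ × α) where
  Adj u v := u.1 = v.1 ∧ H.Adj u.2 v.2
  symm := ⟨by rintro u v ⟨h1, h2⟩; exact ⟨h1.symm, h2.symm⟩⟩
  loopless := ⟨fun u h => H.loopless.1 u.2 h.2⟩

end Graphs

/-! ### The complexes `Y_{G,k}` and `Y_{A,k}` -/

/-- The balanced complex `Y_{G,k}`, i.e. the simplicial join `V_1 * ⋯ * V_{k+1}` where
`V_i = {i} × G`: its faces are exactly the subsets of `Fin (k+1) × G` containing at most one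
vertex of each colour `i : Fin (k+1)`. -/
def YG (G : Type*) [Fintype G] [DecidableEq G] (k : ℕ) :
    Finset (Finset (Fin (k + 1) × G)) :=
  (univ : Finset (Finset (Fin (k + 1) × G))).filter
    (fun s => ∀ x ∈ s, ∀ y ∈ s, Prod.fst x = Prod.fst y → x = y)

/-- The balanced `k`-dimensional Cayley complex `Y_{A,k}`: the full `(k-1)`-skeleton of
`Y_{G,k}` together with all `k`-simplices `{(1,x_1),…,(k+1,x_{k+1})}` such that
`x_1 ⋯ x_{k+1} ∈ A` (the ordered product is taken along the colours `1,…,k+1`). -/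
def YA (G : Type*) [Group G] [Fintype G] [DecidableEq G] (k : ℕ) (A : Finset G) :
    Finset (Finset (Fin (k + 1) × G)) :=
  (YG G k).filter (fun s => s.card ≤ k ∨
    ∃ x : Fin (k + 1) → G, s = univ.image (fun i => (i, x i)) ∧ (List.ofFn x).prod ∈ A)

/-! ### Unitary representations, `ν(A)` and `D(G)` -/

variable {G : Type*} [Group G]

/-- A unitary matrix representation `ρ : G → U(d)` is irreducible if `d > 0` and the only
invariant subspaces of `ℂ^d` are `⊥` and `⊤`. -/
def IsIrred {d : ℕ} (ρ : G →* Matrix.unitaryGroup (Fin d) ℂ) : Prop :=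
  0 < d ∧ ∀ W : Submodule ℂ (EuclideanSpace ℂ (Fin d)),
    (∀ g : G, ∀ v ∈ W, Matrix.toEuclideanLin (ρ g : Matrix (Fin d) (Fin d) ℂ) v ∈ W) →
      W = ⊥ ∨ W = ⊤

/-- A matrix representation is nontrivial if it is not identically the identity. -/
def IsNontrivialRep {d : ℕ} (ρ : G →* Matrix.unitaryGroup (Fin d) ℂ) : Prop :=
  ∃ g : G, (ρ g : Matrix (Fin d) (Fin d) ℂ) ≠ 1

/-- The operator (spectral) norm of a complex `d × d` matrix. -/
noncomputable def opNorm {d : ℕ} (M : Matrix (Fin d) (Fin d) ℂ) : ℝ :=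
  ‖Matrix.toEuclideanCLM (𝕜 := ℂ) M‖

/-- The Fourier transform `1̂_A(ρ) = ∑_{x ∈ A} ρ(x)` of the indicator of `A` at `ρ`. -/
noncomputable def fourier {d : ℕ} (ρ : G →* Matrix.unitaryGroup (Fin d) ℂ) (A : Finset G) :
    Matrix (Fin d) (Fin d) ℂ :=
  ∑ a ∈ A, (ρ a : Matrix (Fin d) (Fin d) ℂ)

/-- `ν(A) = max_{ρ ∈ Ĝ₊} ‖1̂_A(ρ)‖`: the supremum of the operator norms `‖∑_{x ∈ A} ρ(x)‖`
over all nontrivial irreducible unitary matrix representations of `G` (this agrees with the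
maximum over any complete set `Ĝ₊` of pairwise inequivalent nontrivial irreducible unitary
representations, since equivalent irreducible unitary representations are unitarily
equivalent and hence give the same norm). -/
noncomputable def nu (G : Type*) [Group G] (A : Finset G) : ℝ :=
  sSup {x : ℝ | ∃ (d : ℕ) (ρ : G →* Matrix.unitaryGroup (Fin d) ℂ),
    IsIrred ρ ∧ IsNontrivialRep ρ ∧ x = opNorm (fourier ρ A)}

/-- Equivalence of two unitary matrix representations: an invertible intertwiner. -/
def RepEquiv {d₁ d₂ : ℕ} (ρ₁ : G →* Matrix.unitaryGroup (Fin d₁) ℂ)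
    (ρ₂ : G →* Matrix.unitaryGroup (Fin d₂) ℂ) : Prop :=
  ∃ T : Matrix (Fin d₂) (Fin d₁) ℂ, Function.Bijective T.mulVecLin ∧
    ∀ g : G, T * (ρ₁ g : Matrix (Fin d₁) (Fin d₁) ℂ) = (ρ₂ g : Matrix (Fin d₂) (Fin d₂) ℂ) * T

/-- `(dims, ρs)` is a complete family of irreducible unitary representations of `G`:
each member is irreducible, they are pairwise inequivalent, and every irreducible unitary
matrix representation of `G` is equivalent to some member.  Such a family realizes `Ĝ`,
and the sum of the degrees of the irreducible representations is `D(G) = ∑ i, dims i`. -/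
def IsCompleteIrrepFamily (G : Type*) [Group G] {ι : Type} (dims : ι → ℕ)
    (ρs : ∀ i : ι, G →* Matrix.unitaryGroup (Fin (dims i)) ℂ) : Prop :=
  (∀ i, IsIrred (ρs i)) ∧
  (∀ i j, i ≠ j → ¬ RepEquiv (ρs i) (ρs j)) ∧
  (∀ (d : ℕ) (π : G →* Matrix.unitaryGroup (Fin d) ℂ), IsIrred π → ∃ i, RepEquiv π (ρs i))

end BCC

open BCC

/-!
For `σ ∈ X(k)` write `dφ(σ) = ∑_{v ∈ σ} a_v` with `a_v = ±φ(σ ∖ v)`. The identity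
`(∑ a_v)² = ½ ∑_{v ≠ w} (a_v + a_w)² - (k - 1) ∑ a_v²` turns each pair term into
`(φ_τ(w) - φ_τ(v))²`, the energy of the localization `φ_τ` along the edge `vw` of the link of
`τ = σ ∖ {v, w}` (the signs work out exactly as in `d ∘ d = 0`). Summing over `σ`, and using that
every `(k-1)`-simplex lies in `m` simplices of dimension `k`,
`‖dφ‖² = ∑_τ ‖d φ_τ‖² - (k - 1) m ‖φ‖²`.
Finally `∑_v φ_τ(v) = (d^*φ)(τ) = 0`, so `‖d φ_τ‖² ≥ λ ‖φ_τ‖²`, and `∑_τ ‖φ_τ‖² = k ‖φ‖²`.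
-/

namespace Garland

lemma sq_sum_eq_half_sum_sq_add_sub {ι : Type*} [DecidableEq ι] (s : Finset ι) (a : ι → ℝ) :
    (∑ v ∈ s, a v) ^ 2 =
      (1 / 2) * ∑ v ∈ s, ∑ w ∈ s.erase v, (a v + a w) ^ 2 - (#s - 2) * ∑ v ∈ s, a v ^ 2 := by
  have h : ∀ v ∈ s, ∑ w ∈ s.erase v, (a v + a w) ^ 2 =
      #s * a v ^ 2 + 2 * a v * ∑ w ∈ s, a w + ∑ w ∈ s, a w ^ 2 - 4 * a v ^ 2 := by
    intro v hv
    rw [sum_erase_eq_sub hv]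
    simp only [add_sq, sum_add_distrib, sum_const, nsmul_eq_mul, ← mul_sum]
    ring
  rw [sum_congr rfl h]
  simp only [sum_sub_distrib, sum_add_distrib, ← mul_sum, ← sum_mul, sum_const, nsmul_eq_mul]
  ring

section Signs

variable {V : Type*} [LinearOrder V]

lemma sgn_sq (σ : Finset V) (v : V) : sgn σ v ^ 2 = 1 := by
  rw [sgn, ← pow_mul, pow_mul', neg_one_sq, one_pow]

lemma sgn_eq_sgn_erase_mul {σ : Finset V} {w : V} (hw : w ∈ σ) (v : V) :
    sgn σ v = sgn (σ.erase w) v * if w < v then -1 else 1 := by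
  unfold sgn
  rw [filter_erase]
  split_ifs with h
  · rw [← card_erase_add_one (mem_filter.2 ⟨hw, h⟩), pow_succ]
  · rw [erase_eq_of_notMem (s := σ.filter (· < v)) fun hc => h (mem_filter.1 hc).2, mul_one]

lemma sgn_mul_sgn {σ : Finset V} {v w : V} (hv : v ∈ σ) (hw : w ∈ σ) (hvw : v ≠ w) :
    sgn σ v * sgn σ w = -(sgn (σ.erase w) v * sgn (σ.erase v) w) := by
  rw [sgn_eq_sgn_erase_mul hw v, sgn_eq_sgn_erase_mul hv w]
  rcases hvw.lt_or_gt with h | h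
  · rw [if_neg h.asymm, if_pos h]; ring
  · rw [if_pos h, if_neg h.asymm]; ring

lemma sq_sgn_mul_add_sgn_mul {σ : Finset V} {v w : V} (hv : v ∈ σ) (hw : w ∈ σ) (hvw : v ≠ w)
    (x y : ℝ) :
    (sgn σ v * x + sgn σ w * y) ^ 2 = (sgn (σ.erase v) w * x - sgn (σ.erase w) v * y) ^ 2 := by
  linear_combination x ^ 2 * (sgn_sq σ v - sgn_sq (σ.erase v) w) +
    y ^ 2 * (sgn_sq σ w - sgn_sq (σ.erase w) v) + 2 * x * y * sgn_mul_sgn hv hw hvw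

end Signs

section Reindexing

variable {V : Type*} [Fintype V] [DecidableEq V] {M : Type*} [AddCommMonoid M]

lemma sum_sum_erase_eq (S : Finset (Finset V)) (F : Finset V → V → M) :
    ∑ σ ∈ S, ∑ v ∈ σ, F (σ.erase v) v = ∑ τ, ∑ v ∈ τᶜ with insert v τ ∈ S, F τ v := by
  rw [sum_sigma', sum_sigma']
  refine sum_nbij' (fun x => ⟨x.1.erase x.2, x.2⟩) (fun x => ⟨insert x.2 x.1, x.2⟩)
    ?_ ?_ ?_ ?_ fun _ _ => rfl <;> simp +contextual

lemma card_filter_insert_mem (X : Finset (Finset V)) (τ : Finset V) :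
    #{v ∈ τᶜ | insert v τ ∈ X} = #{η ∈ X | τ ⊆ η ∧ #η = #τ + 1} := by
  refine card_bij (fun v _ => insert v τ) ?_ ?_ ?_
  · intro v hv
    simp_all [card_insert_of_notMem]
  · intro v hv w hw h
    simp_all [insert_inj]
  · intro η hη
    obtain ⟨hηX, hτη⟩ := mem_filter.1 hη
    obtain ⟨v, hv, rfl⟩ := exists_eq_insert_iff.2 ⟨hτη.1, hτη.2.symm⟩
    exact ⟨v, by simp [hv, hηX], rfl⟩

lemma sum_sum_sum_erase_eq (S : Finset (Finset V)) (H : Finset V → V → V → M) :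
    ∑ σ ∈ S, ∑ v ∈ σ, ∑ w ∈ σ.erase v, H ((σ.erase v).erase w) v w =
      ∑ τ, ∑ v, ∑ w,
        if v ≠ w ∧ v ∉ τ ∧ w ∉ τ ∧ insert v (insert w τ) ∈ S then H τ v w else 0 := by
  simp only [← sum_filter, sum_sigma']
  refine sum_nbij' (fun x => ⟨(x.1.erase x.2.1).erase x.2.2, x.2.1, x.2.2⟩)
    (fun x => ⟨insert x.2.1 (insert x.2.2 x.1), x.2.1, x.2.2⟩) ?_ ?_ ?_ ?_ fun _ _ => rfl
  all_goals simp +contextual [eq_comm]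

end Reindexing

section Cochains

variable {V : Type*} [Fintype V] [LinearOrder V] {X : Finset (Finset V)} {n : ℕ}

noncomputable def extendByZero (ψ : Cochain X n) (s : Finset V) : ℝ :=
  if h : s ∈ X ∧ #s = n then ψ ⟨s, h⟩ else 0

lemma mem_and_card_of_extendByZero_ne_zero {ψ : Cochain X n} {s : Finset V}
    (h : extendByZero ψ s ≠ 0) : s ∈ X ∧ #s = n := by
  by_contra hs
  exact h (dif_neg hs)

lemma normSq_eq_sum_filter (ψ : Cochain X n) :
    normSq ψ = ∑ s ∈ X with #s = n, extendByZero ψ s ^ 2 := by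
  rw [sum_subtype _ (fun _ => mem_filter) (fun s => extendByZero ψ s ^ 2), normSq]
  exact sum_congr rfl fun s _ => by rw [extendByZero, dif_pos s.2]

lemma normSq_eq_sum_extendByZero (ψ : Cochain X n) :
    normSq ψ = ∑ s, extendByZero ψ s ^ 2 := by
  rw [normSq_eq_sum_filter]
  refine sum_subset (subset_univ _) fun s _ hs => ?_
  rw [extendByZero, dif_neg (by simpa using hs), sq, zero_mul]

lemma normSq_d_eq_sum (φ : Cochain X n) :
    normSq (d X n φ) = ∑ σ ∈ X, (∑ v ∈ σ, sgn σ v * extendByZero φ (σ.erase v)) ^ 2 := by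
  rw [normSq_eq_sum_filter, ← sum_subset (filter_subset (#· = n + 1) X)]
  · refine sum_congr rfl fun σ hσ => ?_
    rw [extendByZero, dif_pos (mem_filter.1 hσ)]
    rfl
  intro σ hσX hσ
  have hσ : #σ ≠ n + 1 := by simpa [hσX] using hσ
  refine sq_eq_zero_iff.2 (sum_eq_zero fun v hv => ?_)
  rw [extendByZero, dif_neg fun h => ?_, mul_zero]
  have := card_erase_add_one hv
  omega

lemma restrictLink_eq (φ : Cochain X n) (τ : Finset V) (v : V) :
    restrictLink X φ τ v =
      if v ∈ τ then 0 else sgn (insert v τ) v * extendByZero φ (insert v τ) := by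
  unfold restrictLink extendByZero
  by_cases hv : v ∈ τ <;> simp [hv]

lemma restrictLink_erase_self (φ : Cochain X n) {ρ : Finset V} {w : V} (hw : w ∈ ρ) :
    restrictLink X φ (ρ.erase w) w = sgn ρ w * extendByZero φ ρ := by
  rw [restrictLink_eq, if_neg (notMem_erase w ρ), insert_erase hw]

lemma mem_and_card_of_restrictLink_ne_zero {φ : Cochain X n} {τ : Finset V} {v : V}
    (h : restrictLink X φ τ v ≠ 0) : v ∉ τ ∧ insert v τ ∈ X ∧ #(insert v τ) = n := by
  rw [restrictLink_eq] at h
  split_ifs at h with hv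
  · exact absurd rfl h
  · exact ⟨hv, mem_and_card_of_extendByZero_ne_zero (right_ne_zero_of_mul h)⟩

lemma sum_restrictLink_eq_sum_compl (φ : Cochain X n) (τ : Finset V) (g : ℝ → ℝ)
    (hg : g 0 = 0) :
    ∑ v, g (restrictLink X φ τ v) =
      ∑ v ∈ τᶜ, g (sgn (insert v τ) v * extendByZero φ (insert v τ)) := by
  rw [← sum_subset (subset_univ τᶜ) fun v _ hv => by
    rw [restrictLink_eq, if_pos (by simpa using hv), hg]]
  exact sum_congr rfl fun v hv => by rw [restrictLink_eq, if_neg (mem_compl.1 hv)]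

lemma sum_restrictLink_eq_dStar (φ : Cochain X (n + 1)) {τ : Finset V} (hτ : τ ∈ X ∧ #τ = n) :
    ∑ v, restrictLink X φ τ v = dStar X n φ ⟨τ, hτ⟩ :=
  sum_restrictLink_eq_sum_compl φ τ id rfl

lemma sum_sum_restrictLink_sq (φ : Cochain X n) :
    ∑ τ, ∑ v, restrictLink X φ τ v ^ 2 = n * normSq φ := by
  simp only [sum_restrictLink_eq_sum_compl φ _ (· ^ 2) (zero_pow two_ne_zero), mul_pow,
    sgn_sq, one_mul]
  calc ∑ τ, ∑ v ∈ τᶜ, extendByZero φ (insert v τ) ^ 2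
      = ∑ σ, ∑ v ∈ σ, extendByZero φ (insert v (σ.erase v)) ^ 2 := by
        rw [sum_sum_erase_eq univ fun τ v => extendByZero φ (insert v τ) ^ 2]
        simp
    _ = ∑ σ, #σ * extendByZero φ σ ^ 2 := by
        refine sum_congr rfl fun σ _ => ?_
        rw [sum_congr rfl fun v hv => by rw [insert_erase hv], sum_const, nsmul_eq_mul]
    _ = n * normSq φ := by
        rw [normSq_eq_sum_extendByZero, mul_sum]
        refine sum_congr rfl fun σ _ => ?_
        by_cases hσ : extendByZero φ σ = 0
        · simp [hσ]
        · rw [(mem_and_card_of_extendByZero_ne_zero hσ).2]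

lemma sum_card_sub_two_mul_sum_sq {m : ℕ}
    (hdeg : ∀ σ ∈ X, #σ = n → #{η ∈ X | σ ⊆ η ∧ #η = n + 1} = m) (φ : Cochain X n) :
    ∑ σ ∈ X, (#σ - 2 : ℝ) * ∑ v ∈ σ, extendByZero φ (σ.erase v) ^ 2 =
      (n - 1) * m * normSq φ := by
  have h : ∀ σ ∈ X, (#σ - 2 : ℝ) * ∑ v ∈ σ, extendByZero φ (σ.erase v) ^ 2 =
      ∑ v ∈ σ, (#(σ.erase v) - 1 : ℝ) * extendByZero φ (σ.erase v) ^ 2 := fun σ _ => by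
    rw [mul_sum]
    refine sum_congr rfl fun v hv => ?_
    rw [cast_card_erase_of_mem hv]
    ring
  rw [sum_congr rfl h, sum_sum_erase_eq X fun τ _ => (#τ - 1 : ℝ) * extendByZero φ τ ^ 2,
    normSq_eq_sum_extendByZero, mul_sum]
  refine sum_congr rfl fun τ _ => ?_
  rw [sum_const, nsmul_eq_mul]
  by_cases hτ : extendByZero φ τ = 0
  · simp [hτ]
  obtain ⟨hτX, hτn⟩ := mem_and_card_of_extendByZero_ne_zero hτ
  rw [card_filter_insert_mem, hτn, hdeg τ hτX hτn]
  ring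

lemma sum_linkEnergy_eq (g : Finset V → V → ℝ) :
    ∑ τ, linkEnergy X τ (g τ) = (1 / 2) * ∑ σ ∈ X, ∑ v ∈ σ, ∑ w ∈ σ.erase v,
      (g ((σ.erase v).erase w) w - g ((σ.erase v).erase w) v) ^ 2 := by
  rw [sum_sum_sum_erase_eq X fun τ v w => (g τ w - g τ v) ^ 2, mul_sum]
  rfl

theorem normSq_d_eq_sum_linkEnergy_sub {m : ℕ}
    (hdeg : ∀ σ ∈ X, #σ = n → #{η ∈ X | σ ⊆ η ∧ #η = n + 1} = m) (φ : Cochain X n) :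
    normSq (d X n φ) = ∑ τ, linkEnergy X τ (restrictLink X φ τ) - (n - 1) * m * normSq φ := by
  have hpair : ∀ σ : Finset V, ∀ v ∈ σ, ∀ w ∈ σ.erase v,
      (sgn σ v * extendByZero φ (σ.erase v) + sgn σ w * extendByZero φ (σ.erase w)) ^ 2 =
        (restrictLink X φ ((σ.erase v).erase w) w -
          restrictLink X φ ((σ.erase v).erase w) v) ^ 2 := by
    intro σ v hv w hw
    obtain ⟨hwv, hwσ⟩ := mem_erase.1 hw
    rw [restrictLink_erase_self φ hw, erase_right_comm,
      restrictLink_erase_self φ (mem_erase.2 ⟨hwv.symm, hv⟩)]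
    exact sq_sgn_mul_add_sgn_mul hv hwσ hwv.symm _ _
  rw [normSq_d_eq_sum, sum_linkEnergy_eq, ← sum_card_sub_two_mul_sum_sq hdeg φ, mul_sum,
    ← sum_sub_distrib]
  refine sum_congr rfl fun σ _ => ?_
  rw [sq_sum_eq_half_sum_sq_add_sub, sum_congr rfl fun v hv => sum_congr rfl (hpair σ v hv)]
  simp only [mul_pow, sgn_sq, one_mul]

end Cochains

section LinkEnergy

variable {V : Type*} [Fintype V] [LinearOrder V]

lemma linkEnergy_nonneg (X : Finset (Finset V)) (τ : Finset V) (f : V → ℝ) :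
    0 ≤ linkEnergy X τ f := by
  unfold linkEnergy
  refine mul_nonneg (by norm_num) (sum_nonneg fun u _ => sum_nonneg fun v _ => ?_)
  split_ifs
  exacts [sq_nonneg _, le_rfl]

lemma linkLambda2_mul_sum_sq_le {X : Finset (Finset V)} {τ : Finset V} {f : V → ℝ}
    (hf : ∀ v, v ∉ linkVerts X τ → f v = 0) (hsum : ∑ v, f v = 0) :
    linkLambda2 X τ * ∑ v, f v ^ 2 ≤ linkEnergy X τ f := by
  by_cases hf0 : f = 0
  · simp [hf0, linkEnergy_nonneg]
  have hpos : 0 < ∑ v, f v ^ 2 := by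
    obtain ⟨u, hu⟩ := Function.ne_iff.1 hf0
    exact sum_pos' (fun v _ => sq_nonneg _) ⟨u, mem_univ u, pow_two_pos_of_ne_zero hu⟩
  refine (le_div_iff₀ hpos).1 (csInf_le ⟨0, ?_⟩ ⟨f, hf, hsum, hf0, rfl⟩)
  rintro r ⟨g, -, -, -, rfl⟩
  exact div_nonneg (linkEnergy_nonneg X τ g) (sum_nonneg fun v _ => sq_nonneg _)

theorem mul_sum_restrictLink_sq_le_linkEnergy {X : Finset (Finset V)} {n : ℕ} {lam : ℝ}
    (hdc : ∀ s ∈ X, ∀ t ⊆ s, t ∈ X) (hlam : ∀ τ ∈ X, #τ = n → lam ≤ linkLambda2 X τ)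
    {φ : Cochain X (n + 1)} (hφ : dStar X n φ = 0) (τ : Finset V) :
    lam * ∑ v, restrictLink X φ τ v ^ 2 ≤ linkEnergy X τ (restrictLink X φ τ) := by
  by_cases h : ∀ v, restrictLink X φ τ v = 0
  · simp [h, linkEnergy_nonneg]
  push Not at h
  obtain ⟨u, hu⟩ := h
  obtain ⟨huτ, huX, hucard⟩ := mem_and_card_of_restrictLink_ne_zero hu
  have hτ : τ ∈ X ∧ #τ = n :=
    ⟨hdc _ huX _ (subset_insert u τ), by rw [card_insert_of_notMem huτ] at hucard; omega⟩
  have hsupp : ∀ v, v ∉ linkVerts X τ → restrictLink X φ τ v = 0 := fun v hv => by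
    by_contra hv0
    obtain ⟨hvτ, hvX, -⟩ := mem_and_card_of_restrictLink_ne_zero hv0
    exact hv (mem_filter.2 ⟨mem_univ v, hvτ, hvX⟩)
  have hsum : ∑ v, restrictLink X φ τ v = 0 := by
    rw [sum_restrictLink_eq_dStar φ hτ, hφ]
    rfl
  calc lam * ∑ v, restrictLink X φ τ v ^ 2
      ≤ linkLambda2 X τ * ∑ v, restrictLink X φ τ v ^ 2 :=
        mul_le_mul_of_nonneg_right (hlam τ hτ.1 hτ.2) (sum_nonneg fun v _ => sq_nonneg _)
    _ ≤ linkEnergy X τ (restrictLink X φ τ) := linkLambda2_mul_sum_sq_le hsupp hsum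

end LinkEnergy

end Garland

open Garland

theorem garland_estimate_general {V : Type} [Fintype V] [LinearOrder V]
    (X : Finset (Finset V)) (hdc : ∀ s ∈ X, ∀ t ⊆ s, t ∈ X)
    (k j : ℕ) (hkj : k = j + 1)
    (m : ℕ)
    (hdeg : ∀ σ ∈ X, σ.card = k → (X.filter fun η => σ ⊆ η ∧ η.card = k + 1).card = m)
    (lam : ℝ) (hlam : ∀ τ ∈ X, τ.card = j → lam ≤ linkLambda2 X τ)
    (φ : Cochain X (j + 1)) (hφ : dStar X j φ = 0) :
    ((k : ℝ) * lam - ((k : ℝ) - 1) * m) * normSq φ ≤ normSq (d X (j + 1) φ) := by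
  subst hkj
  have hlinks : lam * ((j + 1 : ℕ) * normSq φ) ≤ ∑ τ, linkEnergy X τ (restrictLink X φ τ) := by
    rw [← sum_sum_restrictLink_sq, mul_sum]
    exact sum_le_sum fun τ _ => mul_sum_restrictLink_sq_le_linkEnergy hdc hlam hφ τ
  rw [normSq_d_eq_sum_linkEnergy_sub hdeg φ]
  linarith

/-- **Theorem 6 (Garland's eigenvalue estimate).**  Let `X` be a finite pure `k`-dimensional
simplicial complex (`k = j+1 ≥ 1`) in which every `(k-1)`-simplex is contained in exactly `m`
`k`-simplices.  Let `λ(X) = min{λ₂(lk(X,τ)) : τ ∈ X(k-2)}`.  Then for every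
`φ ∈ C^{k-1}(X)` with `d_{k-2}^* φ = 0` one has
`‖d_{k-1}φ‖² ≥ (k·λ(X) - (k-1)·m)·‖φ‖²`.
(`lam` ranges over all lower bounds for the `λ₂`'s of the links, which is equivalent to
taking `lam = λ(X)`.) -/
theorem garland_estimate {V : Type} [Fintype V] [LinearOrder V]
    (X : Finset (Finset V)) (hdc : ∀ s ∈ X, ∀ t ⊆ s, t ∈ X)
    (k j : ℕ) (hkj : k = j + 1)
    (hpure : ∀ s ∈ X, ∃ t ∈ X, s ⊆ t ∧ t.card = k + 1)
    (m : ℕ)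
    (hdeg : ∀ σ ∈ X, σ.card = k → (X.filter fun η => σ ⊆ η ∧ η.card = k + 1).card = m)
    (lam : ℝ) (hlam : ∀ τ ∈ X, τ.card = j → lam ≤ linkLambda2 X τ)
    (φ : Cochain X (j + 1)) (hφ : dStar X j φ = 0) :
    ((k : ℝ) * lam - ((k : ℝ) - 1) * m) * normSq φ ≤ normSq (d X (j + 1) φ) :=
  garland_estimate_general X hdc k j hkj m hdeg lam hlam φ hφ
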